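/- arXiv:2312.07583 — 3 statements merged into one kernel-verified Lean document; each statement's English description precedes it below -/
import Mathlib

section
/- Let $w_1,\dots,w_n$ be positive reals each satisfying $1/c_1 \le w_i \le c_2$ with $c_1, c_2 \ge 1$, and let $w'_n$ also satisfy $1/c_1 \le w'_n \le c_2$. Let $b_1,\dots,b_n, b'_n \in \{0,1\}$ with $b_i = b'_i$ for $i < n$. Then $\left| \frac{\sum_{i=1}^n w_i b_i}{\sum_{i=1}^n w_i} - \frac{\sum_{i=1}^{n-1} w_i b_i + w'_n b'_n}{\sum_{i=1}^{n-1} w_i + w'_n} \right| \le \frac{c_1 c_2}{n}$. -/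
set_option maxHeartbeats 2000000 in

theorem stmt_0 (n : ℕ) (hn : 0 < n) (c₁ c₂ : ℝ) (hc₁ : 1 ≤ c₁) (hc₂ : 1 ≤ c₂)
    (w : ℕ → ℝ) (wn' : ℝ) (b : ℕ → ℝ) (bn' : ℝ)
    (hwpos : ∀ i < n, 0 < w i)
    (hw : ∀ i < n, 1 / c₁ ≤ w i ∧ w i ≤ c₂)
    (hwn' : 1 / c₁ ≤ wn' ∧ wn' ≤ c₂)
    (hb : ∀ i < n, b i = 0 ∨ b i = 1)
    (hbn' : bn' = 0 ∨ bn' = 1) :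
    |(∑ i ∈ Finset.range n, w i * b i) / (∑ i ∈ Finset.range n, w i) -
      ((∑ i ∈ Finset.range (n - 1), w i * b i) + wn' * bn') /
        ((∑ i ∈ Finset.range (n - 1), w i) + wn')| ≤ c₁ * c₂ / n := by
  obtain ⟨m, rfl⟩ : ∃ m, n = m + 1 := ⟨n - 1, (Nat.succ_pred_eq_of_pos hn).symm⟩
  have hc₁0 : (0:ℝ) < c₁ := lt_of_lt_of_le one_pos hc₁
  set S := ∑ i ∈ Finset.range m, w i with hS
  set A := ∑ i ∈ Finset.range m, w i * b i with hA
  set u := w m with hu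
  set β := b m with hβ
  set u' := wn' with hu'
  set β' := bn' with hβ'
  have hsum1 : ∑ i ∈ Finset.range (m+1), w i = S + u := Finset.sum_range_succ w m
  have hsum2 : ∑ i ∈ Finset.range (m+1), w i * b i = A + u * β :=
    Finset.sum_range_succ (fun i => w i * b i) m
  have hmm : m + 1 - 1 = m := rfl
  rw [hsum1, hsum2, hmm]
  have hub : 1 / c₁ ≤ u ∧ u ≤ c₂ := hw m (Nat.lt_succ_self m)
  have hA0 : 0 ≤ A := Finset.sum_nonneg fun i hi => by
    rcases hb i (Nat.lt_succ_of_lt (Finset.mem_range.mp hi)) with h | h <;>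
      simp [h, (hwpos i (Nat.lt_succ_of_lt (Finset.mem_range.mp hi))).le]
  have hAS : A ≤ S := Finset.sum_le_sum fun i hi => by
    have hp := (hwpos i (Nat.lt_succ_of_lt (Finset.mem_range.mp hi))).le
    rcases hb i (Nat.lt_succ_of_lt (Finset.mem_range.mp hi)) with h | h
    · rw [h]; nlinarith
    · rw [h]; nlinarith
  have hSm : (m : ℝ) / c₁ ≤ S := by
    calc (m:ℝ)/c₁ = ∑ i ∈ Finset.range m, 1/c₁ := by
          rw [Finset.sum_const, Finset.card_range, nsmul_eq_mul]; ring
      _ ≤ S := Finset.sum_le_sum fun i hi =>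
          (hw i (Nat.lt_succ_of_lt (Finset.mem_range.mp hi))).1
  have hn1 : ((m:ℝ) + 1) ≤ c₁ * (S + u) := by
    have h1 : (m:ℝ) ≤ c₁ * S := by
      rw [div_le_iff₀ hc₁0] at hSm; linarith [hSm]
    have h2 : 1 ≤ c₁ * u := by
      have := hub.1; rw [div_le_iff₀' hc₁0] at this
      calc (1:ℝ) = c₁ * (1/c₁) := by field_simp
        _ ≤ c₁ * u := by nlinarith [hub.1]
    linarith
  have hn2 : ((m:ℝ) + 1) ≤ c₁ * (S + u') := by
    have h1 : (m:ℝ) ≤ c₁ * S := by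
      rw [div_le_iff₀ hc₁0] at hSm; linarith [hSm]
    have h2 : 1 ≤ c₁ * u' := by
      calc (1:ℝ) = c₁ * (1/c₁) := by field_simp
        _ ≤ c₁ * u' := by nlinarith [hwn'.1]
    linarith
  have hS0 : 0 ≤ S := le_trans (by positivity) hSm
  have hu0 : 0 < u := hwpos m (Nat.lt_succ_self m)
  have hu'0 : 0 < u' := lt_of_lt_of_le (by positivity) hwn'.1
  have hD1 : 0 < S + u := by linarith
  have hD2 : 0 < S + u' := by linarith
  have hNpos : (0:ℝ) < (m:ℝ) + 1 := by positivity
  have hrw : (A + u * β) / (S + u) - (A + u' * β') / (S + u')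
      = ((A + u * β) * (S + u') - (A + u' * β') * (S + u)) / ((S + u) * (S + u')) := by
    field_simp
  have hcast : ((m + 1 : ℕ) : ℝ) = (m:ℝ) + 1 := by push_cast; ring
  rw [hrw, hcast, abs_div, abs_of_pos (mul_pos hD1 hD2),
    div_le_div_iff₀ (mul_pos hD1 hD2) hNpos]
  set N := (A + u * β) * (S + u') - (A + u' * β') * (S + u) with hN
  have key : |N| * ((m:ℝ) + 1) = |N * ((m:ℝ)+1)| := by
    rw [abs_mul, abs_of_pos hNpos]
  rw [key]
  have hub2 := hub.2
  have hwn2 := hwn'.2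
  have hβc : β = 0 ∨ β = 1 := hb m (Nat.lt_succ_self m)
  have hβc : β = 0 ∨ β = 1 := hb m (Nat.lt_succ_self m)
  clear_value S A u β u' β' N
  clear hw hb hwpos hsum1 hsum2 hS hA hu hβ hu' hβ' hSm hwn' hub hrw hcast
  have hAu : 0 ≤ A * u := mul_nonneg hA0 hu0.le
  have hAu' : 0 ≤ A * u' := mul_nonneg hA0 hu'0.le
  have hSAu : 0 ≤ (S - A) * u := mul_nonneg (by linarith) hu0.le
  have hSAu' : 0 ≤ (S - A) * u' := mul_nonneg (by linarith) hu'0.le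
  have hScu : 0 ≤ S * (c₂ - u) := mul_nonneg hS0 (by linarith)
  have hScu' : 0 ≤ S * (c₂ - u') := mul_nonneg hS0 (by linarith)
  have hcu : 0 ≤ c₂ * u := by positivity
  have hcu' : 0 ≤ c₂ * u' := by positivity
  have huu' : 0 ≤ u * u' := (mul_pos hu0 hu'0).le
  have habs : |N| ≤ c₂ * (S + u) ∨ |N| ≤ c₂ * (S + u') := by
    rcases hβc with h | h <;> rcases hbn' with h' | h' <;> rw [hN, h, h']
    · left; rw [abs_le]; constructor <;> linarith
    · rcases le_total u u' with hcmp | hcmp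
      · left; rw [abs_le]
        have h1 : 0 ≤ (S - A) * (u' - u) := mul_nonneg (by linarith) (by linarith)
        have h2 : 0 ≤ (c₂ - u') * (S + u) := mul_nonneg (by linarith) hD1.le
        have h3 : 0 ≤ A * (u' - u) := mul_nonneg hA0 (by linarith)
        constructor <;> linarith
      · right; rw [abs_le]
        have h1 : 0 ≤ (S - A) * (u - u') := mul_nonneg (by linarith) (by linarith)
        have h2 : 0 ≤ (c₂ - u) * (S + u') := mul_nonneg (by linarith) hD2.le
        have h3 : 0 ≤ A * (u - u') := mul_nonneg hA0 (by linarith)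
        constructor <;> linarith
    · rcases le_total u u' with hcmp | hcmp
      · left; rw [abs_le]
        have h1 : 0 ≤ (S - A) * (u' - u) := mul_nonneg (by linarith) (by linarith)
        have h2 : 0 ≤ (c₂ - u') * (S + u) := mul_nonneg (by linarith) hD1.le
        have h3 : 0 ≤ A * (u' - u) := mul_nonneg hA0 (by linarith)
        constructor <;> linarith
      · right; rw [abs_le]
        have h1 : 0 ≤ (S - A) * (u - u') := mul_nonneg (by linarith) (by linarith)
        have h2 : 0 ≤ (c₂ - u) * (S + u') := mul_nonneg (by linarith) hD2.le
        have h3 : 0 ≤ A * (u - u') := mul_nonneg hA0 (by linarith)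
        constructor <;> linarith
    · left; rw [abs_le]; constructor <;> linarith
  have hc₂0 : (0:ℝ) ≤ c₂ := by linarith
  rw [abs_le]
  rcases habs with hB | hB
  · constructor
    · nlinarith [abs_nonneg N, neg_abs_le N, mul_le_mul hB hn2 hNpos.le (by positivity),
        neg_abs_le (N * ((m:ℝ)+1)), abs_mul N ((m:ℝ)+1), abs_of_pos hNpos]
    · calc N * ((m:ℝ)+1) ≤ |N| * ((m:ℝ)+1) := by
            have := le_abs_self N; nlinarith
        _ ≤ (c₂ * (S + u)) * (c₁ * (S + u')) :=
            mul_le_mul hB hn2 hNpos.le (by positivity)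
        _ = c₁ * c₂ * ((S + u) * (S + u')) := by ring
  · constructor
    · nlinarith [abs_nonneg N, neg_abs_le N, mul_le_mul hB hn1 hNpos.le (by positivity),
        neg_abs_le (N * ((m:ℝ)+1)), abs_mul N ((m:ℝ)+1), abs_of_pos hNpos]
    · calc N * ((m:ℝ)+1) ≤ |N| * ((m:ℝ)+1) := by
            have := le_abs_self N; nlinarith
        _ ≤ (c₂ * (S + u')) * (c₁ * (S + u)) :=
            mul_le_mul hB hn1 hNpos.le (by positivity)
        _ = c₁ * c₂ * ((S + u) * (S + u')) := by ring
end

section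
/- Let $S > 0$, $A \ge 0$, $B \ge 0$ with $A + B \le S$, and let $u, v > 0$. Then $\frac{u A + v B + u v}{(S + u)(S + v)} \le \frac{\max(u, v)}{S + \min(u,v)}$. -/
theorem stmt_4 (S A B u v : ℝ) (hS : 0 < S) (hA : 0 ≤ A) (hB : 0 ≤ B)
    (hAB : A + B ≤ S) (hu : 0 < u) (hv : 0 < v) :
    (u * A + v * B + u * v) / ((S + u) * (S + v)) ≤ max u v / (S + min u v) := by
  rcases le_total u v with h | h
  · rw [max_eq_right h, min_eq_left h,
      div_le_div_iff₀ (by positivity) (by positivity)]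
    have key : u * A + v * B + u * v ≤ v * (S + v) := by
      nlinarith [mul_nonneg hA (sub_nonneg.2 h)]
    nlinarith [mul_le_mul_of_nonneg_right key (by positivity : (0:ℝ) ≤ S + u)]
  · rw [max_eq_left h, min_eq_right h,
      div_le_div_iff₀ (by positivity) (by positivity)]
    have key : u * A + v * B + u * v ≤ u * (S + u) := by
      nlinarith [mul_nonneg hB (sub_nonneg.2 h)]
    nlinarith [mul_le_mul_of_nonneg_right key (by positivity : (0:ℝ) ≤ S + v)]
end

section
/- Let $g(h, D)$ denote the weighted error $\frac{\sum_{i=1}^n w_i \mathbf{1}(y_i \ne h(x_i))}{\sum_{i=1}^n w_i}$ of a fixed classifier $h$ on dataset $D$ of size $n$, where all weights lie in $[1/c_1, c_2]$ with $c_1, c_2 \ge 1$. Then for any two datasets $D, D'$ differing in at most one data point's private features (which may change both the indicator $\mathbf{1}(y_i \ne h(x_i))$ and the weight $w_i$ for that point), $|g(h, D) - g(h, D')| \le \frac{c_1 c_2}{n}$. -/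
set_option maxHeartbeats 1600000 in
theorem stmt_11 (n : ℕ) (hn : 0 < n) (c₁ c₂ : ℝ) (hc₁ : 1 ≤ c₁) (hc₂ : 1 ≤ c₂)
    (w w' : Fin n → ℝ) (e e' : Fin n → ℝ) (j : Fin n)
    (hdiff : ∀ i, i ≠ j → w i = w' i ∧ e i = e' i)
    (hw : ∀ i, 1 / c₁ ≤ w i ∧ w i ≤ c₂)
    (hw' : ∀ i, 1 / c₁ ≤ w' i ∧ w' i ≤ c₂)
    (he : ∀ i, e i = 0 ∨ e i = 1)
    (he' : ∀ i, e' i = 0 ∨ e' i = 1) :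
    |(∑ i, w i * e i) / (∑ i, w i) - (∑ i, w' i * e' i) / (∑ i, w' i)| ≤
      c₁ * c₂ / n := by
  have hc₁0 : (0:ℝ) < c₁ := lt_of_lt_of_le one_pos hc₁
  have hc₂0 : (0:ℝ) < c₂ := lt_of_lt_of_le one_pos hc₂
  have hwpos : ∀ i, 0 < w i := fun i =>
    lt_of_lt_of_le (by positivity) (hw i).1
  have hw'pos : ∀ i, 0 < w' i :=
    fun i => lt_of_lt_of_le (by positivity) (hw' i).1
  set T := ∑ i ∈ Finset.univ.erase j, w i with hTdef
  set B := ∑ i ∈ Finset.univ.erase j, w i * e i with hBdef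
  have hT' : ∑ i ∈ Finset.univ.erase j, w' i = T :=
    Finset.sum_congr rfl fun i hi => ((hdiff i (Finset.mem_erase.mp hi).1).1).symm
  have hB' : ∑ i ∈ Finset.univ.erase j, w' i * e' i = B :=
    Finset.sum_congr rfl fun i hi => by
      obtain ⟨h1, h2⟩ := hdiff i (Finset.mem_erase.mp hi).1
      rw [h1, h2]
  have hS : ∑ i, w i = w j + T :=
    (Finset.add_sum_erase _ _ (Finset.mem_univ j)).symm
  have hS' : ∑ i, w' i = w' j + T := by
    rw [← hT']; exact (Finset.add_sum_erase _ _ (Finset.mem_univ j)).symm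
  have hA : ∑ i, w i * e i = w j * e j + B :=
    (Finset.add_sum_erase _ _ (Finset.mem_univ j)).symm
  have hA' : ∑ i, w' i * e' i = w' j * e' j + B := by
    rw [← hB']; exact (Finset.add_sum_erase _ _ (Finset.mem_univ j)).symm
  have hT0 : 0 ≤ T := Finset.sum_nonneg fun i _ => (hwpos i).le
  have hB0 : 0 ≤ B := Finset.sum_nonneg fun i _ => by
    rcases he i with h | h <;> rw [h] <;> nlinarith [hwpos i]
  have hBT : B ≤ T := Finset.sum_le_sum fun i _ => by
    rcases he i with h | h <;> rw [h] <;> nlinarith [hwpos i]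
  have hnS : (n : ℝ) / c₁ ≤ w j + T := by
    rw [← hS]
    calc (n:ℝ)/c₁ = ∑ _i : Fin n, (1/c₁ : ℝ) := by
          simp [Finset.sum_const, div_eq_mul_inv]
      _ ≤ ∑ i, w i := Finset.sum_le_sum fun i _ => (hw i).1
  have hnS' : (n : ℝ) / c₁ ≤ w' j + T := by
    rw [← hS']
    calc (n:ℝ)/c₁ = ∑ _i : Fin n, (1/c₁ : ℝ) := by
          simp [Finset.sum_const, div_eq_mul_inv]
      _ ≤ ∑ i, w' i := Finset.sum_le_sum fun i _ => (hw' i).1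
  clear_value T B
  have hnpos : (0:ℝ) < n := by exact_mod_cast hn
  have hSpos : 0 < w j + T := lt_of_lt_of_le (by positivity) hnS
  have hS'pos : 0 < w' j + T := lt_of_lt_of_le (by positivity) hnS'
  rw [hS, hS', hA, hA']
  have hbpos := hwpos j
  have hb'pos := hw'pos j
  have hbc : w j ≤ c₂ := (hw j).2
  have hb'c : w' j ≤ c₂ := (hw' j).2
  -- product hints
  have h1 : 0 ≤ B * w' j := mul_nonneg hB0 hb'pos.le
  have h2 : 0 ≤ (T - B) * w j := mul_nonneg (sub_nonneg.mpr hBT) hbpos.le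
  have h3 : 0 ≤ (T - B) * w' j := mul_nonneg (sub_nonneg.mpr hBT) hb'pos.le
  have h4 : 0 ≤ B * w j := mul_nonneg hB0 hbpos.le
  have h5 : B * w' j ≤ B * c₂ := mul_le_mul_of_nonneg_left hb'c hB0
  have h6 : B * w j ≤ B * c₂ := mul_le_mul_of_nonneg_left hbc hB0
  have h7 : B * c₂ ≤ T * c₂ := mul_le_mul_of_nonneg_right hBT hc₂0.le
  have h8 : (T - B) * w j ≤ (T - B) * c₂ :=
    mul_le_mul_of_nonneg_left hbc (sub_nonneg.mpr hBT)
  have h9 : w j * w' j ≤ c₂ * w' j := mul_le_mul_of_nonneg_right hbc hb'pos.le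
  have h12 : (T - B) * w' j ≤ (T - B) * c₂ :=
    mul_le_mul_of_nonneg_left hb'c (sub_nonneg.mpr hBT)
  have h13 : 0 < c₂ * w' j := mul_pos hc₂0 hb'pos
  have h14 : 0 < w j * w' j := mul_pos hbpos hb'pos
  have h15 : 0 ≤ B * c₂ := mul_nonneg hB0 hc₂0.le
  have h16 : 0 ≤ T * c₂ := mul_nonneg hT0 hc₂0.le
  have key : |(w j * e j + B) * (w' j + T) - (w' j * e' j + B) * (w j + T)|
      ≤ c₂ * (w' j + T) := by
    rcases he j with hj | hj <;> rcases he' j with hj' | hj' <;>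
      rw [hj, hj', abs_le] <;> constructor
    · nlinarith [h1, h6, h7, h13]
    · nlinarith [h4, h5, h7, h13]
    · nlinarith [h4, h3, h14, h13, h16]
    · nlinarith [h6, h12, h9]
    · nlinarith [h1, h2, h14, h13, h16]
    · nlinarith [h5, h8, h9]
    · nlinarith [h12, h2, h15, h13]
    · nlinarith [h8, h3, h15, h13]
  rw [div_sub_div _ _ hSpos.ne' hS'pos.ne', abs_div,
    abs_of_pos (mul_pos hSpos hS'pos), div_le_div_iff₀ (mul_pos hSpos hS'pos) hnpos]
  have hcn : (n:ℝ) ≤ c₁ * (w j + T) := by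
    rw [div_le_iff₀ hc₁0] at hnS; linarith
  rw [mul_comm (w j + T) (w' j * e' j + B)]
  have hmm := mul_le_mul key hcn hnpos.le
    (by positivity : (0:ℝ) ≤ c₂ * (w' j + T))
  nlinarith [hmm]
end
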